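/- arXiv:1103.1144 — 4 statements merged into one kernel-verified Lean document; each statement's English description precedes it below -/
import Mathlib

section
/- Let m be a squarefree positive integer and O the ring of integers of ℚ(√-m). Every non-trivial element of finite order in PSL₂(O) = SL₂(O)/{±I} has order 2 or 3. -/
open Matrix Polynomial

/-- Cayley–Hamilton for 2×2 matrices, by hand. -/
lemma aux_CH2 {R : Type*} [CommRing R] (A : Matrix (Fin 2) (Fin 2) R) :
    A * A = (Matrix.trace A) • A - (A.det) • (1 : Matrix (Fin 2) (Fin 2) R) := by
  ext i j
  fin_cases i <;> fin_cases j <;>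
    simp [Matrix.mul_apply, Fin.sum_univ_two, Matrix.trace_fin_two, Matrix.det_fin_two,
      Matrix.one_apply, mul_comm] <;> ring

/-- Unipotent powers. -/
lemma aux_unip {R : Type*} [CommRing R] (N : Matrix (Fin 2) (Fin 2) R) (hN : N * N = 0) :
    ∀ k : ℕ, (1 + N) ^ k = 1 + k • N := by
  intro k
  induction k with
  | zero => simp
  | succ k ih =>
    rw [pow_succ, ih, add_mul, one_mul, mul_add, mul_one, smul_mul_assoc, hN, smul_zero,
      add_zero, succ_nsmul]
    abel

/-- Trace bound for finite-order complex 2×2 matrices of determinant 1. -/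
lemma aux_trace_bound (M : Matrix (Fin 2) (Fin 2) ℂ) (k : ℕ) (hk : k ≠ 0) (hM : M ^ k = 1)
    (hdet : M.det = 1) :
    (Matrix.trace M).im = 0 ∧ ‖Matrix.trace M‖ ≤ 2 := by
  set t := Matrix.trace M with ht
  have hdeg : (C (1:ℂ) * X ^ 2 + C (-t) * X + C 1).degree ≠ 0 := by
    rw [Polynomial.degree_quadratic one_ne_zero]; norm_num
  obtain ⟨l, hl⟩ := IsAlgClosed.exists_root _ hdeg
  have hl' : l ^ 2 - t * l + 1 = 0 := by
    have := hl
    simp only [Polynomial.IsRoot, eval_add, eval_mul, eval_C, eval_pow, eval_X, one_mul] at this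
    linear_combination this
  have hl0 : l ≠ 0 := by
    intro h
    rw [h] at hl'
    simp at hl'
  have hdet0 : (M - l • 1).det = 0 := by
    have hd := hdet
    rw [Matrix.det_fin_two] at hd
    have htt : t = M 0 0 + M 1 1 := Matrix.trace_fin_two M
    rw [Matrix.det_fin_two]
    simp only [Matrix.sub_apply, Matrix.smul_apply, Matrix.one_apply, smul_eq_mul]
    norm_num
    linear_combination hd + l * htt + hl'
  obtain ⟨v, hv0, hv⟩ := (Matrix.exists_mulVec_eq_zero_iff).mpr hdet0
  have hvM : M.mulVec v = l • v := by
    have : M.mulVec v - l • v = 0 := by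
      rw [← hv, Matrix.sub_mulVec, Matrix.smul_mulVec, Matrix.one_mulVec]
    exact sub_eq_zero.mp this
  have hpow : ∀ j : ℕ, (M ^ j).mulVec v = l ^ j • v := by
    intro j
    induction j with
    | zero => simp [Matrix.one_mulVec]
    | succ j ih =>
      rw [pow_succ, ← Matrix.mulVec_mulVec, hvM, Matrix.mulVec_smul, ih, smul_smul,
        pow_succ, mul_comm]
  have hlk : l ^ k = 1 := by
    have h1 : (l ^ k - 1) • v = 0 := by
      have := hpow k
      rw [hM, Matrix.one_mulVec] at this
      rw [sub_smul, one_smul, ← this, sub_self]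
    by_contra h
    apply hv0
    funext i
    have := congrFun h1 i
    simp only [Pi.smul_apply, smul_eq_mul, Pi.zero_apply] at this
    rcases mul_eq_zero.mp this with h' | h'
    · exact absurd (sub_eq_zero.mp h') h
    · exact h'
  have habsl : ‖l‖ = 1 := by
    have h1 : ‖l‖ ^ k = 1 := by rw [← norm_pow, hlk]; exact norm_one
    have h2 := norm_nonneg l
    rcases pow_eq_one_iff_cases.mp h1 with h | h | h
    · exact absurd h hk
    · exact h
    · nlinarith
  have hconj : (starRingEnd ℂ) l = l⁻¹ := by
    have h1 : l * (starRingEnd ℂ) l = 1 := by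
      rw [Complex.mul_conj]
      norm_cast
      rw [Complex.normSq_eq_norm_sq, habsl]; norm_num
    field_simp
    linear_combination h1
  have htl : t = l + l⁻¹ := by
    field_simp
    linear_combination -hl'
  constructor
  · rw [htl, ← hconj]
    simp [Complex.add_im, Complex.conj_im]
  · rw [htl, ← hconj]
    calc ‖l + (starRingEnd ℂ) l‖ ≤ ‖l‖ + ‖(starRingEnd ℂ) l‖ :=
          norm_add_le _ _
      _ ≤ 2 := by rw [Complex.norm_conj, habsl]; norm_num

theorem finite_order_elements_of_Bianchi_PSL2 (m : ℕ) (hm : Squarefree m) (hmpos : 0 < m)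
    (K : Type) [Field K] [NumberField K] (α : K) (hα : α ^ 2 = -(m : K))
    (hK : Algebra.adjoin ℚ ({α} : Set K) = ⊤)
    (x : Matrix.SpecialLinearGroup (Fin 2) (NumberField.RingOfIntegers K) ⧸
      Subgroup.normalClosure
        ({-1} : Set (Matrix.SpecialLinearGroup (Fin 2) (NumberField.RingOfIntegers K))))
    (hx : x ≠ 1) (hfin : IsOfFinOrder x) :
    orderOf x = 2 ∨ orderOf x = 3 := by
  classical
  set O := NumberField.RingOfIntegers K with hO
  set G := Matrix.SpecialLinearGroup (Fin 2) O with hG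
  obtain ⟨A, hA⟩ := QuotientGroup.mk_surjective x
  set n := orderOf x with hn
  have hn0 : n ≠ 0 := (hfin.orderOf_pos).ne'
  have hxn : x ^ n = 1 := pow_orderOf_eq_one x
  -- A ^ n = ± 1
  haveI hnorm : (Subgroup.zpowers (-1 : G)).Normal := by
    constructor
    intro g hg h
    obtain ⟨z, rfl⟩ := Subgroup.mem_zpowers_iff.mp hg
    have hcz : Commute ((-1 : G) ^ z) h := (Commute.neg_one_left h).zpow_left z
    have : h * (-1 : G) ^ z * h⁻¹ = (-1 : G) ^ z := by
      rw [← hcz.eq, mul_assoc, mul_inv_cancel, mul_one]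
    rw [this]
    exact Subgroup.mem_zpowers_iff.mpr ⟨z, rfl⟩
  have hsub : Subgroup.normalClosure ({-1} : Set G) ≤ Subgroup.zpowers (-1 : G) :=
    Subgroup.normalClosure_le_normal (by
      intro g hg
      rw [Set.mem_singleton_iff] at hg
      rw [hg]
      exact Subgroup.mem_zpowers _)
  have hmem : A ^ n ∈ Subgroup.normalClosure ({-1} : Set G) := by
    rw [← QuotientGroup.eq_one_iff]
    rw [QuotientGroup.mk_pow, hA]
    exact hxn
  have hneg1sq : ((-1 : G)) ^ 2 = 1 := by
    have : ((-1 : G)) * (-1 : G) = 1 := by rw [neg_one_mul, neg_neg]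
    rw [pow_two, this]
  have hAn : A ^ n = 1 ∨ A ^ n = -1 := by
    obtain ⟨z, hz⟩ := Subgroup.mem_zpowers_iff.mp (hsub hmem)
    have h2 : ((-1 : G) ^ (2 : ℤ)) = 1 := by
      rw [show (2 : ℤ) = ((2 : ℕ) : ℤ) from rfl, _root_.zpow_natCast, hneg1sq]
    rcases Int.even_or_odd z with ⟨j, hj⟩ | ⟨j, hj⟩
    · left
      rw [← hz, hj, ← two_mul, _root_.zpow_mul, h2, _root_.one_zpow]
    · right
      rw [← hz, hj, _root_.zpow_add, _root_.zpow_mul, h2, _root_.one_zpow, one_mul, _root_.zpow_one]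
  have hA2n : A ^ (2 * n) = 1 := by
    rw [mul_comm, pow_mul]
    rcases hAn with h | h <;> rw [h]
    · rw [one_pow]
    · rw [hneg1sq]
  -- pass to matrices
  set T : Matrix (Fin 2) (Fin 2) O := (A : Matrix (Fin 2) (Fin 2) O) with hT
  have hTdet : T.det = 1 := A.2
  have hTpow : T ^ (2 * n) = 1 := by
    rw [hT, ← Matrix.SpecialLinearGroup.coe_pow, hA2n, Matrix.SpecialLinearGroup.coe_one]
  -- embed into ℂ
  haveI : Algebra.IsAlgebraic ℚ K := Algebra.IsAlgebraic.of_finite ℚ K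
  let σ : K →ₐ[ℚ] ℂ := IsAlgClosed.lift
  let f : O →+* ℂ := σ.toRingHom.comp (algebraMap O K)
  set Mc : Matrix (Fin 2) (Fin 2) ℂ := T.map f with hMc
  have hMcpow : Mc ^ (2 * n) = 1 := by
    rw [hMc, ← RingHom.mapMatrix_apply, ← map_pow, hTpow, _root_.map_one]
  have hMcdet : Mc.det = 1 := by
    rw [hMc, ← RingHom.mapMatrix_apply, ← RingHom.map_det, hTdet, _root_.map_one]
  have hMctr : Matrix.trace Mc = f (Matrix.trace T) := by
    simp [hMc, Matrix.trace_fin_two, Matrix.map_apply, map_add]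
  obtain ⟨him, habs⟩ := aux_trace_bound Mc (2 * n) (by positivity) hMcpow hMcdet
  -- the trace as an element of K
  have htop : (algebraMap O K (Matrix.trace T)) ∈ Algebra.adjoin ℚ ({α} : Set K) := by
    rw [hK]; exact Algebra.mem_top
  rw [Algebra.adjoin_singleton_eq_range_aeval] at htop
  obtain ⟨p, hp⟩ := htop
  have hq : (X ^ 2 + C ((m : ℚ)) : ℚ[X]).Monic := Polynomial.monic_X_pow_add_C _ two_ne_zero
  set r := p %ₘ (X ^ 2 + C ((m : ℚ))) with hr
  have hdegr : r.degree ≤ 1 := by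
    have h1 := Polynomial.degree_modByMonic_lt p hq
    rw [Polynomial.degree_X_pow_add_C (by norm_num) ((m : ℚ))] at h1
    rcases hd : r.degree with _ | d
    · exact bot_le
    · rw [hd] at h1
      rw [WithBot.some_eq_coe] at h1 ⊢
      have h2 : d < 2 := WithBot.coe_lt_coe.mp h1
      exact WithBot.coe_le_coe.mpr (by omega)
  have haq : (aeval α) (X ^ 2 + C ((m : ℚ)) : ℚ[X]) = 0 := by
    simp [hα]
  have htK : algebraMap O K (Matrix.trace T) =
      algebraMap ℚ K (r.coeff 1) * α + algebraMap ℚ K (r.coeff 0) := by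
    have hsplit := Polynomial.modByMonic_add_div p (X ^ 2 + C ((m : ℚ)))
    calc algebraMap O K (Matrix.trace T) = (aeval α) p := hp.symm
      _ = (aeval α) (r + (X ^ 2 + C ((m : ℚ))) * (p /ₘ (X ^ 2 + C ((m : ℚ))))) := by
          rw [hr, hsplit]
      _ = (aeval α) r := by rw [_root_.map_add, _root_.map_mul, haq, zero_mul, add_zero]
      _ = _ := by
          conv_lhs => rw [Polynomial.eq_X_add_C_of_degree_le_one hdegr]
          simp [_root_.map_add, _root_.map_mul, Polynomial.aeval_X, Polynomial.aeval_C]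
  have hσ : Matrix.trace Mc = (r.coeff 1 : ℂ) * σ α + (r.coeff 0 : ℂ) := by
    have hff : f (Matrix.trace T) = σ (algebraMap O K (Matrix.trace T)) := rfl
    rw [hMctr, hff, htK, map_add σ, map_mul σ, σ.commutes, σ.commutes]
    norm_cast
  have hσα : (σ α) ^ 2 = -(m : ℂ) := by
    rw [← map_pow, hα, map_neg, map_natCast]
  have him0 : (σ α).im ≠ 0 := by
    intro h0
    have hre := congrArg Complex.re hσα
    rw [pow_two, Complex.mul_re, h0] at hre
    simp only [mul_zero, zero_mul, sub_zero, Complex.neg_re, Complex.natCast_re] at hre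
    nlinarith [sq_nonneg ((σ α).re), (by exact_mod_cast hmpos : (0:ℝ) < (m:ℝ))]
  have hc1 : r.coeff 1 = 0 := by
    rw [hσ] at him
    have h2 : ((r.coeff 1 : ℝ)) * (σ α).im = 0 := by
      simpa [Complex.add_im, Complex.mul_im, Complex.ratCast_re, Complex.ratCast_im] using him
    rcases mul_eq_zero.mp h2 with h | h
    · exact_mod_cast h
    · exact absurd h him0
  have htK' : algebraMap O K (Matrix.trace T) = algebraMap ℚ K (r.coeff 0) := by
    rw [htK, hc1, map_zero, zero_mul, zero_add]
  have hint0 : IsIntegral ℤ (r.coeff 0) := by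
    rw [← isIntegral_algebraMap_iff (B := K) (algebraMap ℚ K).injective, ← htK']
    exact NumberField.RingOfIntegers.isIntegral_coe _
  obtain ⟨z, hz⟩ := IsIntegrallyClosed.isIntegral_iff.mp hint0
  have hz' : r.coeff 0 = (z : ℚ) := by rw [← hz, eq_intCast]
  have htrc : Matrix.trace Mc = ((z : ℝ) : ℂ) := by
    rw [hσ, hc1, hz']
    push_cast
    ring
  have habs' : |(z : ℝ)| ≤ 2 := by
    rw [htrc, Complex.norm_real, Real.norm_eq_abs] at habs
    exact habs
  have hz2 : z = -2 ∨ z = -1 ∨ z = 0 ∨ z = 1 ∨ z = 2 := by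
    have h1 := abs_le.mp habs'
    have h2 : (-2 : ℤ) ≤ z := by exact_mod_cast h1.1
    have h3 : z ≤ 2 := by exact_mod_cast h1.2
    omega
  have htr : Matrix.trace T = (z : O) := by
    apply NumberField.RingOfIntegers.coe_injective
    rw [htK', hz', map_intCast, map_intCast]
  have hCH : T * T = (z : O) • T - 1 := by
    have h := aux_CH2 T
    rw [htr, hTdet, one_smul] at h
    exact h
  -- helper facts
  have hcoe3 : ∀ B : G, ((B ^ 3 : G) : Matrix (Fin 2) (Fin 2) O) =
      (B : Matrix (Fin 2) (Fin 2) O) * (B : Matrix (Fin 2) (Fin 2) O) *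
        (B : Matrix (Fin 2) (Fin 2) O) := by
    intro B
    rw [Matrix.SpecialLinearGroup.coe_pow, pow_succ, pow_two]
  have hmkneg1 : ((-1 : G) : _ ⧸ Subgroup.normalClosure ({-1} : Set G)) = 1 := by
    rw [QuotientGroup.eq_one_iff]
    exact Subgroup.subset_normalClosure (Set.mem_singleton _)
  have hxA : (A : _ ⧸ Subgroup.normalClosure ({-1} : Set G)) = x := hA
  -- now case on z
  rcases hz2 with rfl | rfl | rfl | rfl | rfl
  · -- z = -2 : A is -unipotent, contradiction
    exfalso
    have h2O : ((-2 : ℤ) : O) • T = -(T + T) := by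
      push_cast
      rw [neg_smul, two_smul]
    have hNN : (-T - 1) * (-T - 1) = 0 := by
      have hmul : (-T - 1) * (-T - 1) = T * T + T + T + 1 := by
        simp only [sub_mul, mul_sub, neg_mul, mul_neg, Matrix.neg_mul, Matrix.mul_neg, neg_neg,
          mul_one, one_mul]; abel
      rw [hmul, hCH, h2O]
      abel
    have h1 := aux_unip (-T - 1) hNN (2 * n)
    have hTN : (1 + (-T - 1)) = -T := by abel
    have hnegpow : (-T) ^ (2 * n) = T ^ (2 * n) := (even_two_mul n).neg_pow T
    rw [hTN, hnegpow, hTpow] at h1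
    have h3 : (2 * n) • (-T - 1) = 0 := left_eq_add.mp h1
    have h4 : -T - 1 = 0 := by
      apply Matrix.ext
      intro i j
      have h5 : ((2 * n) • (-T - 1)) i j = 0 := by rw [h3]; rfl
      rw [Matrix.smul_apply] at h5
      have h6 : ((2 * n : ℕ) : O) * (-T - 1) i j = 0 := by
        rw [← nsmul_eq_mul]; exact h5
      rcases mul_eq_zero.mp h6 with h | h
      · exact absurd h (Nat.cast_ne_zero.mpr (Nat.mul_ne_zero two_ne_zero hn0))
      · simpa using h
    have hTm1 : T = -1 := by
      have h5 : -T = 1 := by rw [sub_eq_zero] at h4; exact h4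
      calc T = -(-T) := (neg_neg T).symm
        _ = -1 := by rw [h5]
    have hAm1 : A = -1 := by
      apply Subtype.coe_injective
      show ((A : G) : Matrix (Fin 2) (Fin 2) O) = ((-1 : G) : Matrix (Fin 2) (Fin 2) O)
      rw [← hT, hTm1, Matrix.SpecialLinearGroup.coe_neg, Matrix.SpecialLinearGroup.coe_one]
    rw [← hxA, hAm1] at hx
    exact hx hmkneg1
  · -- z = -1 : A ^ 3 = 1
    right
    have hT3 : T * T * T = 1 := by
      rw [hCH]
      push_cast
      rw [neg_smul, one_smul, sub_mul, neg_mul, hCH]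
      push_cast
      rw [neg_smul, one_smul, one_mul]
      abel
    have hA3 : A ^ 3 = 1 := by
      apply Subtype.coe_injective
      show ((A ^ 3 : G) : Matrix (Fin 2) (Fin 2) O) = ((1 : G) : Matrix (Fin 2) (Fin 2) O)
      rw [hcoe3, ← hT, hT3, Matrix.SpecialLinearGroup.coe_one]
    have hx3 : x ^ 3 = 1 := by
      rw [← hxA, ← QuotientGroup.mk_pow, hA3, QuotientGroup.eq_one_iff]
      exact one_mem _
    haveI : Fact (Nat.Prime 3) := ⟨Nat.prime_three⟩
    exact orderOf_eq_prime hx3 hx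
  · -- z = 0 : A ^ 2 = -1
    left
    have hT2 : T * T = -1 := by
      rw [hCH]
      push_cast
      rw [zero_smul, zero_sub]
    have hA2 : A ^ 2 = -1 := by
      apply Subtype.coe_injective
      show ((A ^ 2 : G) : Matrix (Fin 2) (Fin 2) O) = ((-1 : G) : Matrix (Fin 2) (Fin 2) O)
      rw [Matrix.SpecialLinearGroup.coe_pow, pow_two, ← hT, hT2,
        Matrix.SpecialLinearGroup.coe_neg, Matrix.SpecialLinearGroup.coe_one]
    have hx2 : x ^ 2 = 1 := by
      rw [← hxA, ← QuotientGroup.mk_pow, hA2, hmkneg1]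
    haveI : Fact (Nat.Prime 2) := ⟨Nat.prime_two⟩
    exact orderOf_eq_prime hx2 hx
  · -- z = 1 : A ^ 3 = -1
    right
    have hT3 : T * T * T = -1 := by
      rw [hCH]
      push_cast
      rw [one_smul, sub_mul, one_mul, hCH]
      push_cast
      rw [one_smul]
      abel
    have hA3 : A ^ 3 = -1 := by
      apply Subtype.coe_injective
      show ((A ^ 3 : G) : Matrix (Fin 2) (Fin 2) O) = ((-1 : G) : Matrix (Fin 2) (Fin 2) O)
      rw [hcoe3, ← hT, hT3, Matrix.SpecialLinearGroup.coe_neg,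
        Matrix.SpecialLinearGroup.coe_one]
    have hx3 : x ^ 3 = 1 := by
      rw [← hxA, ← QuotientGroup.mk_pow, hA3, hmkneg1]
    haveI : Fact (Nat.Prime 3) := ⟨Nat.prime_three⟩
    exact orderOf_eq_prime hx3 hx
  · -- z = 2 : A unipotent, contradiction
    exfalso
    have h2O : ((2 : ℤ) : O) • T = T + T := by
      push_cast
      rw [two_smul]
    have hNN : (T - 1) * (T - 1) = 0 := by
      have hmul : (T - 1) * (T - 1) = T * T - T - T + 1 := by
        simp only [sub_mul, mul_sub, mul_one, one_mul]; abel
      rw [hmul, hCH, h2O]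
      abel
    have h1 := aux_unip (T - 1) hNN (2 * n)
    have hTN : (1 + (T - 1)) = T := by abel
    rw [hTN, hTpow] at h1
    have h3 : (2 * n) • (T - 1) = 0 := left_eq_add.mp h1
    have h4 : T - 1 = 0 := by
      apply Matrix.ext
      intro i j
      have h5 : ((2 * n) • (T - 1)) i j = 0 := by rw [h3]; rfl
      rw [Matrix.smul_apply] at h5
      have h6 : ((2 * n : ℕ) : O) * (T - 1) i j = 0 := by
        rw [← nsmul_eq_mul]; exact h5
      rcases mul_eq_zero.mp h6 with h | h
      · exact absurd h (Nat.cast_ne_zero.mpr (Nat.mul_ne_zero two_ne_zero hn0))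
      · simpa using h
    have hT1 : T = 1 := by
      have := sub_eq_zero.mp h4
      exact this
    have hA1 : A = 1 := by
      apply Subtype.coe_injective
      show ((A : G) : Matrix (Fin 2) (Fin 2) O) = ((1 : G) : Matrix (Fin 2) (Fin 2) O)
      rw [← hT, hT1, Matrix.SpecialLinearGroup.coe_one]
    rw [← hxA, hA1] at hx
    exact hx (by rw [QuotientGroup.eq_one_iff]; exact one_mem _)
end

section
/- Let G be a subgroup of SL₂(ℂ) whose image in PSL₂(ℂ) is isomorphic to the symmetric group S₃. Then G is isomorphic to the dicyclic (binary dihedral) group of order 12. -/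
private abbrev SL2 := Matrix.SpecialLinearGroup (Fin 2) ℂ

private lemma fin_two_sq (M : Matrix (Fin 2) (Fin 2) ℂ) :
    M * M = M.trace • M - M.det • 1 := by
  ext i j
  fin_cases i <;> fin_cases j <;>
    simp [Matrix.mul_apply, Fin.sum_univ_two, Matrix.trace_fin_two, Matrix.det_fin_two,
      Matrix.one_apply] <;> ring

private lemma neg_one_ne_one_SL2 : (-1 : SL2) ≠ 1 := by
  intro hh
  have := congrArg (fun m : SL2 => (m : Matrix (Fin 2) (Fin 2) ℂ) 0 0) hh
  simp [Matrix.SpecialLinearGroup.coe_neg, Matrix.SpecialLinearGroup.coe_one] at this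
  exact absurd this (by norm_num)

private lemma invol (A : SL2) (h : A * A = 1) : A = 1 ∨ A = -1 := by
  have hM : (A : Matrix (Fin 2) (Fin 2) ℂ) * A = 1 := by
    rw [← Matrix.SpecialLinearGroup.coe_mul, h, Matrix.SpecialLinearGroup.coe_one]
  have hd : Matrix.det (A : Matrix (Fin 2) (Fin 2) ℂ) = 1 := A.2
  rw [Matrix.det_fin_two] at hd
  have e00 := congrFun (congrFun hM 0) 0
  have e01 := congrFun (congrFun hM 0) 1
  have e10 := congrFun (congrFun hM 1) 0
  simp [Matrix.mul_apply, Fin.sum_univ_two, Matrix.one_apply] at e00 e01 e10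
  have htne : (A : Matrix (Fin 2) (Fin 2) ℂ) 0 0 + (A : Matrix (Fin 2) (Fin 2) ℂ) 1 1 ≠ 0 := by
    intro h0
    have h2 : (2 : ℂ) = 0 := by
      linear_combination -e00 - hd + (A : Matrix (Fin 2) (Fin 2) ℂ) 0 0 * h0
    norm_num at h2
  have hb0 : (A : Matrix (Fin 2) (Fin 2) ℂ) 0 1 = 0 := by
    have h2 : (A : Matrix (Fin 2) (Fin 2) ℂ) 0 1 *
        ((A : Matrix (Fin 2) (Fin 2) ℂ) 0 0 + (A : Matrix (Fin 2) (Fin 2) ℂ) 1 1) = 0 := by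
      linear_combination e01
    rcases mul_eq_zero.1 h2 with h' | h'
    · exact h'
    · exact absurd h' htne
  have hc0 : (A : Matrix (Fin 2) (Fin 2) ℂ) 1 0 = 0 := by
    have h2 : (A : Matrix (Fin 2) (Fin 2) ℂ) 1 0 *
        ((A : Matrix (Fin 2) (Fin 2) ℂ) 0 0 + (A : Matrix (Fin 2) (Fin 2) ℂ) 1 1) = 0 := by
      linear_combination e10
    rcases mul_eq_zero.1 h2 with h' | h'
    · exact h'
    · exact absurd h' htne
  have ha2 : (A : Matrix (Fin 2) (Fin 2) ℂ) 0 0 * (A : Matrix (Fin 2) (Fin 2) ℂ) 0 0 = 1 := by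
    linear_combination e00 - (A : Matrix (Fin 2) (Fin 2) ℂ) 1 0 * hb0
  have hane : (A : Matrix (Fin 2) (Fin 2) ℂ) 0 0 ≠ 0 := by
    intro h0; rw [h0] at ha2; norm_num at ha2
  have had : (A : Matrix (Fin 2) (Fin 2) ℂ) 1 1 = (A : Matrix (Fin 2) (Fin 2) ℂ) 0 0 := by
    have h2 : (A : Matrix (Fin 2) (Fin 2) ℂ) 0 0 *
        ((A : Matrix (Fin 2) (Fin 2) ℂ) 1 1 - (A : Matrix (Fin 2) (Fin 2) ℂ) 0 0) = 0 := by
      linear_combination hd + (A : Matrix (Fin 2) (Fin 2) ℂ) 1 0 * hb0 - ha2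
    rcases mul_eq_zero.1 h2 with h' | h'
    · exact absurd h' hane
    · exact sub_eq_zero.1 h'
  rcases mul_self_eq_one_iff.1 ha2 with h1 | h1
  · left
    apply Subtype.ext
    rw [Matrix.SpecialLinearGroup.coe_one]
    ext i j
    fin_cases i <;> fin_cases j <;> simp [Matrix.one_apply] <;>
      first
        | exact h1 | exact hb0 | exact hc0 | exact had.trans h1
  · right
    apply Subtype.ext
    rw [Matrix.SpecialLinearGroup.coe_neg, Matrix.SpecialLinearGroup.coe_one]
    ext i j
    fin_cases i <;> fin_cases j <;> simp [Matrix.one_apply] <;>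
      first
        | exact h1 | exact hb0 | exact hc0 | exact had.trans h1

private lemma trace_conj_SL2 (B A : SL2) :
    Matrix.trace ((B * A * B⁻¹ : SL2) : Matrix (Fin 2) (Fin 2) ℂ) =
      Matrix.trace ((A : SL2) : Matrix (Fin 2) (Fin 2) ℂ) := by
  rw [Matrix.SpecialLinearGroup.coe_mul, Matrix.trace_mul_comm,
    ← Matrix.SpecialLinearGroup.coe_mul]
  congr 1
  group

private lemma trace_inv_SL2 (A : SL2) :
    Matrix.trace ((A⁻¹ : SL2) : Matrix (Fin 2) (Fin 2) ℂ) =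
      Matrix.trace ((A : SL2) : Matrix (Fin 2) (Fin 2) ℂ) := by
  rw [Matrix.SpecialLinearGroup.coe_inv, Matrix.adjugate_fin_two]
  simp [Matrix.trace_fin_two]
  ring

private def pmOne : Subgroup SL2 where
  carrier := {1, -1}
  one_mem' := Or.inl rfl
  mul_mem' := by
    rintro x y hx hy
    simp only [Set.mem_insert_iff, Set.mem_singleton_iff] at *
    rcases hx with rfl | rfl <;> rcases hy with rfl | rfl <;> simp
  inv_mem' := by
    rintro x hx
    simp only [Set.mem_insert_iff, Set.mem_singleton_iff] at *
    rcases hx with rfl | rfl <;> simp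

private instance : pmOne.Normal := by
  constructor
  intro x hx g
  have hx' : x = 1 ∨ x = -1 := hx
  have hgoal : g * x * g⁻¹ = 1 ∨ g * x * g⁻¹ = -1 := by
    rcases hx' with rfl | rfl
    · left; simp
    · right; simp
  exact hgoal

private lemma mem_N_iff (x : SL2) :
    x ∈ Subgroup.normalClosure ({-1} : Set SL2) ↔ x = 1 ∨ x = -1 := by
  constructor
  · intro hx
    have hle : Subgroup.normalClosure ({-1} : Set SL2) ≤ pmOne :=
      Subgroup.normalClosure_le_normal
        (by intro y hy; rw [Set.mem_singleton_iff] at hy; subst hy; right; rfl)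
    exact hle hx
  · rintro (rfl | rfl)
    · exact one_mem _
    · exact Subgroup.subset_normalClosure rfl

theorem S3_lifts_to_dicyclic (G : Subgroup (Matrix.SpecialLinearGroup (Fin 2) ℂ))
    (h : Nonempty
      ((G.map (QuotientGroup.mk' (Subgroup.normalClosure
        ({-1} : Set (Matrix.SpecialLinearGroup (Fin 2) ℂ))))) ≃* (Equiv.Perm (Fin 3)))) :
    Nonempty (G ≃* QuaternionGroup 3) := by
  obtain ⟨e⟩ := h
  set N := Subgroup.normalClosure ({-1} : Set SL2) with hNdef
  set π := QuotientGroup.mk' N with hπdef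
  have hmem : ∀ g : G, π (g : SL2) ∈ G.map π := fun g => Subgroup.mem_map.mpr ⟨g, g.2, rfl⟩
  set m : G →* (G.map π) := (π.comp G.subtype).codRestrict _ (fun g => hmem g) with hmdef
  have hmsurj : Function.Surjective m := by
    rintro ⟨y, hy⟩
    rw [Subgroup.mem_map] at hy
    obtain ⟨g, hg, hgy⟩ := hy
    exact ⟨⟨g, hg⟩, Subtype.ext hgy⟩
  set ψ : G →* Equiv.Perm (Fin 3) := e.toMonoidHom.comp m with hψdef
  have hψsurj : Function.Surjective ψ := e.surjective.comp hmsurj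
  have hker : ∀ g : G, ψ g = 1 ↔ ((g : SL2) = 1 ∨ (g : SL2) = -1) := by
    intro g
    rw [← mem_N_iff]
    constructor
    · intro hgg
      have h2 : m g = 1 := e.injective (by rw [map_one]; exact hgg)
      have h3 : ((g : SL2) : SL2 ⧸ N) = 1 := Subtype.ext_iff.1 h2
      exact (QuotientGroup.eq_one_iff _).1 h3
    · intro hgg
      have h2 : m g = 1 := Subtype.ext ((QuotientGroup.eq_one_iff _).2 hgg)
      show e (m g) = 1
      rw [h2, map_one]
  -- -1 ∈ G
  have hzG : (-1 : SL2) ∈ G := by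
    by_contra hnz
    obtain ⟨g, hg⟩ := hψsurj (Equiv.swap 0 1)
    have h1 : ψ (g * g) = 1 := by
      rw [map_mul, hg, Equiv.swap_mul_self]
    rcases (hker _).1 h1 with h2 | h2
    · rcases invol (g : SL2) (by rw [← Subgroup.coe_mul]; exact h2) with h3 | h3
      · have : g = 1 := Subtype.ext h3
        rw [this, map_one] at hg
        exact absurd hg.symm (by decide)
      · exact hnz (h3 ▸ g.2)
    · exact hnz (h2 ▸ (g * g).2)
  set z : G := ⟨-1, hzG⟩ with hzdef
  have hz1 : z ≠ 1 := fun hh => neg_one_ne_one_SL2 (Subtype.ext_iff.1 hh)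
  have hz2 : z * z = 1 := Subtype.ext (by simp [hzdef])
  have hzc : ∀ g : G, Commute z g := fun g => Subtype.ext (by simp [Subgroup.coe_mul, hzdef])
  have hkerz : ∀ g : G, ψ g = 1 ↔ g = 1 ∨ g = z := by
    intro g
    rw [hker]
    constructor
    · rintro (h' | h')
      · exact Or.inl (Subtype.ext h')
      · exact Or.inr (Subtype.ext h')
    · rintro (rfl | rfl)
      · left; rfl
      · right; rfl
  -- generators of S3
  set σ : Equiv.Perm (Fin 3) := Equiv.swap 0 1 * Equiv.swap 1 2 with hσdef
  set τ : Equiv.Perm (Fin 3) := Equiv.swap 0 1 with hτdef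
  have hσ3 : σ ^ 3 = 1 := by decide
  have hσ1 : σ ≠ 1 := by decide
  have hτ2 : τ * τ = 1 := by decide
  have hτ1 : τ ≠ 1 := by decide
  have hrel : τ * σ * τ⁻¹ * σ = 1 := by decide
  -- lift of σ
  obtain ⟨a₀, ha₀⟩ := hψsurj σ
  have ha₀3 : a₀ ^ 3 = 1 ∨ a₀ ^ 3 = z := (hkerz _).1 (by rw [map_pow, ha₀, hσ3])
  have hz3 : z ^ 3 = z := by rw [pow_succ, pow_two, hz2, one_mul]
  obtain ⟨a, ha3, haσ⟩ : ∃ a : G, a ^ 3 = z ∧ ψ a = σ := by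
    rcases ha₀3 with h' | h'
    · refine ⟨z * a₀, ?_, ?_⟩
      · rw [(hzc a₀).mul_pow, h', mul_one, hz3]
      · rw [map_mul, (hkerz z).2 (Or.inr rfl), one_mul, ha₀]
    · exact ⟨a₀, h', ha₀⟩
  -- lift of τ
  obtain ⟨b, hbτ⟩ := hψsurj τ
  have hb2 : b ^ 2 = z := by
    rcases (hkerz (b ^ 2)).1 (by rw [map_pow, pow_two, hbτ, hτ2]) with h' | h'
    · exfalso
      rcases invol (b : SL2) (by rw [← Subgroup.coe_mul, ← pow_two]; exact congrArg _ h') with h3 | h3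
      · have : b = 1 := Subtype.ext h3
        rw [this, map_one] at hbτ
        exact hτ1 hbτ.symm
      · have : b = z := Subtype.ext h3
        rw [this] at hbτ
        rw [(hkerz z).2 (Or.inr rfl)] at hbτ
        exact hτ1 hbτ.symm
    · exact h'
  -- a has order dividing 6 and a^3 = z
  have ha6 : a ^ 6 = 1 := by
    have : a ^ 6 = (a ^ 3) ^ 2 := by rw [← pow_mul]
    rw [this, ha3, pow_two, hz2]
  -- conjugation relation
  have hconj : b * a * b⁻¹ = a⁻¹ := by
    have h1 : ψ (b * a * b⁻¹ * a) = 1 := by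
      rw [map_mul, map_mul, map_mul, map_inv, hbτ, haσ]
      exact hrel
    rcases (hkerz _).1 h1 with h' | h'
    · exact mul_eq_one_iff_eq_inv.1 h'
    · exfalso
      have hE : b * a * b⁻¹ = z * a⁻¹ := by
        have := congrArg (· * a⁻¹) h'
        simpa [mul_assoc] using this
      have hEc : (b : SL2) * a * (b : SL2)⁻¹ = (-1) * ((a : SL2))⁻¹ := by
        have := Subtype.ext_iff.1 hE
        simpa [Subgroup.coe_mul, hzdef] using this
      have htr0 : Matrix.trace ((a : SL2) : Matrix (Fin 2) (Fin 2) ℂ) = 0 := by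
        have l1 := trace_conj_SL2 (b : SL2) (a : SL2)
        rw [hEc] at l1
        rw [Matrix.SpecialLinearGroup.coe_mul] at l1
        have l2 : Matrix.trace ((-1 : SL2) * (((a : SL2))⁻¹ : SL2) :
            Matrix (Fin 2) (Fin 2) ℂ) = -Matrix.trace ((a : SL2) : Matrix (Fin 2) (Fin 2) ℂ) := by
          rw [Matrix.SpecialLinearGroup.coe_neg, Matrix.SpecialLinearGroup.coe_one,
            neg_one_mul, Matrix.trace_neg, trace_inv_SL2]
        rw [l2] at l1
        have : (2 : ℂ) * Matrix.trace ((a : SL2) : Matrix (Fin 2) (Fin 2) ℂ) = 0 := by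
          linear_combination -l1
        rcases mul_eq_zero.1 this with h'' | h''
        · norm_num at h''
        · exact h''
      have hA2 : (a : SL2) * (a : SL2) = -1 := by
        apply Subtype.ext
        rw [Matrix.SpecialLinearGroup.coe_mul]
        have := fin_two_sq ((a : SL2) : Matrix (Fin 2) (Fin 2) ℂ)
        rw [htr0, (a : SL2).2, zero_smul, one_smul, zero_sub] at this
        rw [this, Matrix.SpecialLinearGroup.coe_neg, Matrix.SpecialLinearGroup.coe_one]
      have haa : a * a = z := Subtype.ext (by rw [Subgroup.coe_mul]; exact hA2)
      have ha1 : a = 1 := by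
        have h3 : a * a * a = z := by
          have : a * a * a = a ^ 3 := by rw [pow_succ, pow_two]
          rw [this, ha3]
        rw [haa] at h3
        have h4 : z * a = z * 1 := by rw [mul_one]; exact h3
        exact mul_left_cancel h4
      exact hσ1 (by rw [← haσ, ha1, map_one])
  -- powers commute past b
  have hcomm : ∀ k : ℤ, a ^ k * b = b * a ^ (-k) := by
    intro k
    have hc1 : b * a ^ (-k) * b⁻¹ = a ^ k := by
      rw [← conj_zpow, hconj, inv_zpow, ← zpow_neg, neg_neg]
    have h2 := congrArg (· * b) hc1
    simpa [inv_mul_cancel_right] using h2.symm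
  haveI : NeZero (2 * 3) := ⟨by norm_num⟩
  have hv : ∀ i : ZMod (2 * 3), ((i.val : ℕ) : ZMod (2 * 3)) = i := fun i =>
    ZMod.natCast_rightInverse i
  have hz6 : a ^ ((6 : ℕ) : ℤ) = 1 := by rw [zpow_natCast, ha6]
  have hzm : ∀ (i : ZMod (2 * 3)) (k : ℤ), ((k : ZMod (2 * 3)) = i) →
      a ^ k = a ^ (i.val : ℤ) := by
    intro i k hik
    have hdvd : ((2 * 3 : ℕ) : ℤ) ∣ k - (i.val : ℤ) := by
      rw [← ZMod.intCast_zmod_eq_zero_iff_dvd]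
      push_cast
      rw [hv i, hik, sub_self]
    obtain ⟨c, hc⟩ := hdvd
    have hk : k = (i.val : ℤ) + ((6 : ℕ) : ℤ) * c := by push_cast at hc ⊢; linarith
    rw [hk, zpow_add, zpow_mul, hz6, one_zpow, mul_one]
  have hA3 : a ^ ((3 : ℕ) : ℤ) = z := by rw [zpow_natCast]; exact ha3
  have hbb : b * b = a ^ ((3 : ℕ) : ℤ) := by rw [hA3, ← pow_two, hb2]
  -- the homomorphism from QuaternionGroup 3
  set f : QuaternionGroup 3 → G := fun x => match x with
    | .a i => a ^ (i.val : ℤ)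
    | .xa i => b * a ^ (i.val : ℤ)
    with hfdef
  have hf_mul : ∀ x y : QuaternionGroup 3, f (x * y) = f x * f y := by
    rintro (i | i) (j | j)
    · rw [QuaternionGroup.a_mul_a]
      show a ^ (((i + j).val : ℤ)) = a ^ ((i.val : ℤ)) * a ^ ((j.val : ℤ))
      rw [← zpow_add]
      exact (hzm (i + j) ((i.val : ℤ) + (j.val : ℤ)) (by push_cast; rw [hv i, hv j])).symm
    · rw [QuaternionGroup.a_mul_xa]
      show b * a ^ (((j - i).val : ℤ)) = a ^ ((i.val : ℤ)) * (b * a ^ ((j.val : ℤ)))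
      rw [← mul_assoc, hcomm, mul_assoc, ← zpow_add,
        hzm (j - i) (-(i.val : ℤ) + (j.val : ℤ)) (by push_cast; rw [hv i, hv j]; ring)]
    · rw [QuaternionGroup.xa_mul_a]
      show b * a ^ (((i + j).val : ℤ)) = (b * a ^ ((i.val : ℤ))) * a ^ ((j.val : ℤ))
      rw [mul_assoc, ← zpow_add,
        hzm (i + j) ((i.val : ℤ) + (j.val : ℤ)) (by push_cast; rw [hv i, hv j])]
    · rw [QuaternionGroup.xa_mul_xa]
      show a ^ ((((3 : ℕ) + j - i : ZMod (2 * 3)).val : ℤ)) =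
        (b * a ^ ((i.val : ℤ))) * (b * a ^ ((j.val : ℤ)))
      have key : (b * a ^ ((i.val : ℤ))) * (b * a ^ ((j.val : ℤ))) =
          (b * b) * a ^ (-(i.val : ℤ) + (j.val : ℤ)) := by
        rw [mul_assoc, ← mul_assoc (a ^ ((i.val : ℤ))) b (a ^ ((j.val : ℤ))), hcomm (i.val : ℤ),
          mul_assoc b (a ^ (-(i.val : ℤ))) (a ^ ((j.val : ℤ))), ← zpow_add, ← mul_assoc]
      rw [key, hbb, ← zpow_add]
      exact (hzm ((3 : ℕ) + j - i) (((3 : ℕ) : ℤ) + (-(i.val : ℤ) + (j.val : ℤ)))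
          (by push_cast; rw [hv i, hv j]; ring)).symm
  set φ : QuaternionGroup 3 →* G := MonoidHom.mk' f hf_mul with hφdef
  have hψa : ∀ k : ℤ, ψ (a ^ k) = σ ^ k := by
    intro k; rw [map_zpow, haσ]
  have hinj : Function.Injective φ := by
    rw [injective_iff_map_eq_one]
    rintro (i | i) hx
    · have hx' : a ^ ((i.val : ℤ)) = 1 := hx
      have h1 : σ ^ ((i.val : ℤ)) = 1 := by rw [← hψa, hx', map_one]
      have h2 : σ ^ (i.val : ℕ) = 1 := by rw [← zpow_natCast]; exact h1
      have ho : orderOf σ = 3 := orderOf_eq_prime hσ3 hσ1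
      have h3 : 3 ∣ i.val := by
        have := orderOf_dvd_of_pow_eq_one h2
        rwa [ho] at this
      have h4 : i.val < 2 * 3 := ZMod.val_lt i
      have h5 : i.val = 0 ∨ i.val = 3 := by omega
      rcases h5 with h5 | h5
      · have : i = 0 := (ZMod.val_eq_zero i).1 h5
        rw [this, QuaternionGroup.one_def]
      · exfalso
        rw [h5] at hx'
        rw [hA3] at hx'
        exact hz1 hx'
    · exfalso
      have hx' : b * a ^ ((i.val : ℤ)) = 1 := hx
      have h1 : τ * σ ^ ((i.val : ℤ)) = 1 := by
        rw [← hbτ, ← hψa, ← map_mul, hx', map_one]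
      have h2 : τ * σ ^ (i.val : ℕ) = 1 := by rw [← zpow_natCast]; exact h1
      have hτσ : τ = (σ ^ (i.val : ℕ))⁻¹ := eq_inv_of_mul_eq_one_left h2
      have h3 : τ ^ 3 = 1 := by
        rw [hτσ, inv_pow, ← pow_mul, mul_comm (i.val) 3, pow_mul, hσ3, one_pow, inv_one]
      have h4 : τ ^ 3 = τ := by
        rw [pow_succ, pow_two, hτ2, one_mul]
      exact hτ1 (h4 ▸ h3)
  -- cardinalities
  have hkG : ((ψ.ker : Subgroup G) : Set G) = {1, z} := by
    ext g
    simp only [SetLike.mem_coe, MonoidHom.mem_ker, Set.mem_insert_iff, Set.mem_singleton_iff]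
    exact hkerz g
  have hcard_ker : Nat.card ψ.ker = 2 := by
    rw [← SetLike.coe_sort_coe, hkG, Nat.card_coe_set_eq, Set.ncard_pair (Ne.symm hz1)]
  have hquot : Nat.card (G ⧸ ψ.ker) = 6 := by
    rw [Nat.card_congr (QuotientGroup.quotientKerEquivOfSurjective ψ hψsurj).toEquiv]
    rw [Nat.card_eq_fintype_card]
    simp [Fintype.card_perm]
    decide
  have hGcard : Nat.card G = 12 := by
    rw [Subgroup.card_eq_card_quotient_mul_card_subgroup ψ.ker, hquot, hcard_ker]
  have hQcard : Nat.card (QuaternionGroup 3) = 12 := by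
    rw [Nat.card_eq_fintype_card, QuaternionGroup.card]
  haveI : Finite G := Nat.finite_of_card_ne_zero (by rw [hGcard]; norm_num)
  have hbij : Function.Bijective φ :=
    (Nat.bijective_iff_injective_and_card φ).2 ⟨hinj, by rw [hQcard, hGcard]⟩
  exact ⟨(MulEquiv.ofBijective φ hbij).symm⟩
end

section
/- Let G be a subgroup of SL₂(ℂ) whose image in PSL₂(ℂ) is isomorphic to the alternating group A₄. Then G is isomorphic to SL₂(𝔽₃) (the binary tetrahedral group of order 24). -/
/-! Auxiliary development for lifting A₄ to the binary tetrahedral group. -/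

abbrev BT.F24 := Fin 2 × Fin 2 × Fin 2 × Fin 3

namespace BT

def rhoI : F24 → F24 := fun (a, b, c, d) =>
  ⟨a + (if d = 2 then 0 else c) + b * (if d = 1 then 0 else 1),
   b + (if d = 1 then 0 else 1),
   if d = 0 then c else c + 1, d⟩

def rhoT : F24 → F24 := fun (a, b, c, d) => ⟨a, b, c, d + 1⟩

def NF {Γ : Type*} [Group Γ] (z i j t : Γ) : F24 → Γ := fun (a, b, c, d) =>
  z ^ a.val * i ^ b.val * j ^ c.val * t ^ d.val

abbrev SL3 := Matrix.SpecialLinearGroup (Fin 2) (ZMod 3)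

instance : DecidableEq SL3 := fun _ _ => decidable_of_iff _ Subtype.ext_iff.symm

def Im : SL3 := ⟨!![0,-1;1,0], by decide⟩
def Tm : SL3 := ⟨!![1,1;0,1], by decide⟩
def Jm : SL3 := Tm * Im * Tm⁻¹
def Zm : SL3 := Im * Im

section
variable {Γ : Type*} [Group Γ] (z i j t : Γ)
variable (hz2 : z * z = 1) (hzi : i * z = z * i) (hzj : j * z = z * j) (hzt : t * z = z * t)
  (hi2 : i * i = z) (hj2 : j * j = z) (ht3 : t * t * t = 1)
  (hji : j * i = z * (i * j)) (hti : t * i = j * t) (htj : t * j = i * j * t)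

include hz2 hzi hzj hzt hi2 hj2 ht3 hji hti htj in
lemma stepI : ∀ x : F24, NF z i j t x * i = NF z i j t (rhoI x) := by
  have hz2' : ∀ x, z * (z * x) = x := fun x => by rw [← mul_assoc, hz2, one_mul]
  have hzi' : ∀ x, i * (z * x) = z * (i * x) := fun x => by rw [← mul_assoc, hzi, mul_assoc]
  have hzj' : ∀ x, j * (z * x) = z * (j * x) := fun x => by rw [← mul_assoc, hzj, mul_assoc]
  have hzt' : ∀ x, t * (z * x) = z * (t * x) := fun x => by rw [← mul_assoc, hzt, mul_assoc]
  have hi2' : ∀ x, i * (i * x) = z * x := fun x => by rw [← mul_assoc, hi2]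
  have hj2' : ∀ x, j * (j * x) = z * x := fun x => by rw [← mul_assoc, hj2]
  have ht3' : ∀ x, t * (t * (t * x)) = x := fun x => by
    rw [← mul_assoc, ← mul_assoc, ht3, one_mul]
  have hji' : ∀ x, j * (i * x) = z * (i * (j * x)) := fun x => by
    rw [← mul_assoc, hji, mul_assoc, mul_assoc]
  have hti' : ∀ x, t * (i * x) = j * (t * x) := fun x => by rw [← mul_assoc, hti, mul_assoc]
  have htj' : ∀ x, t * (j * x) = i * (j * (t * x)) := fun x => by
    rw [← mul_assoc, htj, mul_assoc, mul_assoc]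
  rintro ⟨a, b, c, d⟩
  fin_cases a <;> fin_cases b <;> fin_cases c <;> fin_cases d <;>
    simp [NF, rhoI, pow_succ, mul_assoc, hz2, hz2', hzi, hzi', hzj, hzj', hzt, hzt',
      hi2, hi2', hj2, hj2', ht3, ht3', hji, hji', hti, hti', htj, htj']

include ht3 in
omit hz2 hzi hzj hzt hi2 hj2 hji hti htj in
lemma stepT : ∀ x : F24, NF z i j t x * t = NF z i j t (rhoT x) := by
  have ht3' : ∀ x, t * (t * (t * x)) = x := fun x => by
    rw [← mul_assoc, ← mul_assoc, ht3, one_mul]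
  rintro ⟨a, b, c, d⟩
  fin_cases d <;> simp [NF, rhoT, pow_succ, mul_assoc, ht3, ht3']

include hz2 hzi hzj hzt hi2 hj2 ht3 hji hti htj in
lemma main_iso (hinj : Function.Injective (NF z i j t)) (hcard : Nat.card Γ = 24) :
    Nonempty (Γ ≃* SL3) := by
  have : Finite Γ := Nat.finite_of_card_ne_zero (by omega)
  have : Fintype Γ := Fintype.ofFinite Γ
  have hcard' : Fintype.card Γ = 24 := by rwa [Nat.card_eq_fintype_card] at hcard
  have hbij : Function.Bijective (NF z i j t) :=
    (Fintype.bijective_iff_injective_and_card _).2 ⟨hinj, by rw [hcard']; decide⟩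
  have hbij' : Function.Bijective (NF Zm Im Jm Tm) := ⟨by decide, by decide⟩
  set E := Equiv.ofBijective _ hbij with hE
  set E' := Equiv.ofBijective _ hbij' with hE'
  set h : Γ → SL3 := fun g => NF Zm Im Jm Tm (E.symm g) with hh
  have hEapp : ∀ x, E x = NF z i j t x := fun _ => rfl
  have hNF : ∀ g, NF z i j t (E.symm g) = g := fun g => E.apply_symm_apply g
  have key1 : ∀ g, h (g * i) = h g * Im := by
    intro g
    have h1 : E.symm (g * i) = rhoI (E.symm g) := by
      rw [Equiv.symm_apply_eq, hEapp, ← stepI z i j t hz2 hzi hzj hzt hi2 hj2 ht3 hji hti htj,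
        hNF]
    rw [hh]; dsimp only; rw [h1]
    exact (stepI Zm Im Jm Tm (by decide) (by decide) (by decide) (by decide) (by decide)
      (by decide) (by decide) (by decide) (by decide) (by decide) (E.symm g)).symm
  have key2 : ∀ g, h (g * t) = h g * Tm := by
    intro g
    have h1 : E.symm (g * t) = rhoT (E.symm g) := by
      rw [Equiv.symm_apply_eq, hEapp, ← stepT z i j t ht3, hNF]
    rw [hh]; dsimp only; rw [h1]
    exact (stepT Zm Im Jm Tm (by decide) (E.symm g)).symm
  have hone : h 1 = 1 := by
    have h1 : E.symm 1 = ((0, 0, 0, 0) : F24) := by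
      rw [Equiv.symm_apply_eq, hEapp]; simp [NF]
    rw [hh]; dsimp only; rw [h1]; decide
  have hi_val : h i = Im := by rw [← one_mul i, key1, hone, one_mul]
  have ht_val : h t = Tm := by rw [← one_mul t, key2, hone, one_mul]
  let D : Subgroup Γ :=
    { carrier := {y | ∀ g, h (g * y) = h g * h y}
      one_mem' := by intro g; simp [hone]
      mul_mem' := by
        intro y y' hy hy' g
        rw [← mul_assoc, hy' (g * y), hy g, hy' y, mul_assoc]
      inv_mem' := by
        intro y hy
        have hyinv : h y⁻¹ = (h y)⁻¹ := by
          have h2 := hy y⁻¹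
          rw [inv_mul_cancel, hone] at h2
          exact eq_inv_of_mul_eq_one_left h2.symm
        intro g
        have h2 := hy (g * y⁻¹)
        rw [mul_assoc, inv_mul_cancel, mul_one] at h2
        rw [h2, hyinv, mul_assoc, mul_inv_cancel, mul_one] }
  have hiD : i ∈ D := fun g => by rw [key1, hi_val]
  have htD : t ∈ D := fun g => by rw [key2, ht_val]
  have hzD : z ∈ D := by rw [← hi2]; exact D.mul_mem hiD hiD
  have hjD : j ∈ D := by
    have h3 : t⁻¹ = t * t := inv_eq_iff_mul_eq_one.2 (by rw [← mul_assoc]; exact ht3)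
    have hjt : j = t * i * (t * t) := by
      rw [← h3, eq_mul_inv_iff_mul_eq]; exact hti.symm
    rw [hjt]
    exact D.mul_mem (D.mul_mem htD hiD) (D.mul_mem htD htD)
  have htop : ∀ y : Γ, y ∈ D := by
    intro y
    have hy : y = NF z i j t (E.symm y) := (hNF y).symm
    rw [hy]
    obtain ⟨a, b, c, d⟩ := E.symm y
    exact D.mul_mem (D.mul_mem (D.mul_mem (D.pow_mem hzD _) (D.pow_mem hiD _))
      (D.pow_mem hjD _)) (D.pow_mem htD _)
  exact ⟨MulEquiv.mk' (E.symm.trans E') (fun a b => htop b a)⟩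
end

/-! Permutations -/

def sigP : Equiv.Perm (Fin 4) := Equiv.swap 0 1 * Equiv.swap 2 3
def tauP : Equiv.Perm (Fin 4) := Equiv.swap 0 1 * Equiv.swap 0 2
def sigP' : Equiv.Perm (Fin 4) := tauP * sigP * tauP⁻¹

lemma permInj : ∀ (b c : Fin 2) (d : Fin 3) (b' c' : Fin 2) (d' : Fin 3),
    sigP ^ b.val * sigP' ^ c.val * tauP ^ d.val =
      sigP ^ b'.val * sigP' ^ c'.val * tauP ^ d'.val → b = b' ∧ c = c' ∧ d = d' := by decide

lemma inj_NF {Γ : Type*} [Group Γ] (ψ : Γ →* Equiv.Perm (Fin 4)) (z i j t : Γ)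
    (hz1 : z ≠ 1) (hψz : ψ z = 1) (hψi : ψ i = sigP) (hψj : ψ j = sigP') (hψt : ψ t = tauP) :
    Function.Injective (NF z i j t) := by
  rintro ⟨a, b, c, d⟩ ⟨a', b', c', d'⟩ hxy
  have h1 := congrArg ψ hxy
  simp only [NF, map_mul, map_pow, hψz, hψi, hψj, hψt, one_pow, one_mul] at h1
  obtain ⟨hb, hc, hd⟩ := permInj b c d b' c' d' h1
  subst hb; subst hc; subst hd
  simp only [NF] at hxy
  have h2 : z ^ a.val = z ^ a'.val :=
    mul_right_cancel (mul_right_cancel (mul_right_cancel hxy))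
  have ha : a = a' := by
    fin_cases a <;> fin_cases a' <;>
      first
        | rfl
        | exact absurd (by simpa using h2) hz1
        | exact absurd (by simpa using h2.symm) hz1
  rw [ha]

lemma sl2c_invol (x : Matrix.SpecialLinearGroup (Fin 2) ℂ) (h : x * x = 1) :
    x = 1 ∨ x = -1 := by
  have hA : (x : Matrix (Fin 2) (Fin 2) ℂ) * x = 1 := by
    rw [← Matrix.SpecialLinearGroup.coe_mul, h, Matrix.SpecialLinearGroup.coe_one]
  have hdet : Matrix.det (x : Matrix (Fin 2) (Fin 2) ℂ) = 1 := x.2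
  set A := (x : Matrix (Fin 2) (Fin 2) ℂ) with hAdef
  set a := A 0 0 with hadef; set b := A 0 1 with hbdef
  set c := A 1 0 with hcdef; set d := A 1 1 with hddef
  have e00 : a * a + b * c = 1 := by
    have := congrFun (congrFun hA 0) 0
    simpa [Matrix.mul_apply, Fin.sum_univ_two, Matrix.one_apply] using this
  have e01 : a * b + b * d = 0 := by
    have := congrFun (congrFun hA 0) 1
    simpa [Matrix.mul_apply, Fin.sum_univ_two, Matrix.one_apply] using this
  have e10 : c * a + d * c = 0 := by
    have := congrFun (congrFun hA 1) 0
    simpa [Matrix.mul_apply, Fin.sum_univ_two, Matrix.one_apply] using this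
  have hdet2 : a * d - b * c = 1 := by
    rw [Matrix.det_fin_two] at hdet; exact hdet
  by_cases had : a + d = 0
  · exfalso
    have h2 : a * (a + d) = 2 := by linear_combination e00 + hdet2
    rw [had, mul_zero] at h2
    norm_num at h2
  · have hb : b = 0 := by
      rcases mul_eq_zero.1 (show b * (a + d) = 0 by linear_combination e01) with h' | h'
      · exact h'
      · exact absurd h' had
    have hc : c = 0 := by
      rcases mul_eq_zero.1 (show c * (a + d) = 0 by linear_combination e10) with h' | h'
      · exact h'
      · exact absurd h' had
    have ha2 : a * a = 1 := by rw [hb] at e00; simpa using e00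
    have had2 : a * d = 1 := by rw [hb] at hdet2; simpa using hdet2
    rcases mul_self_eq_one_iff.1 ha2 with h1 | h1
    · left
      apply Subtype.coe_injective
      have hd : d = 1 := by rw [h1, one_mul] at had2; exact had2
      show (x : Matrix (Fin 2) (Fin 2) ℂ)
        = ((1 : Matrix.SpecialLinearGroup (Fin 2) ℂ) : Matrix (Fin 2) (Fin 2) ℂ)
      rw [Matrix.SpecialLinearGroup.coe_one]
      rw [← hAdef, Matrix.eta_fin_two A, ← hadef, ← hbdef, ← hcdef, ← hddef, hb, hc, hd, h1]
      exact Matrix.one_fin_two.symm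
    · right
      apply Subtype.coe_injective
      have hd : d = -1 := by rw [h1] at had2; linear_combination -had2
      show (x : Matrix (Fin 2) (Fin 2) ℂ)
        = ((-1 : Matrix.SpecialLinearGroup (Fin 2) ℂ) : Matrix (Fin 2) (Fin 2) ℂ)
      rw [Matrix.SpecialLinearGroup.coe_neg, Matrix.SpecialLinearGroup.coe_one]
      rw [← hAdef, Matrix.eta_fin_two A, ← hadef, ← hbdef, ← hcdef, ← hddef, hb, hc, hd, h1]
      rw [Matrix.one_fin_two]
      ext i j
      fin_cases i <;> fin_cases j <;> simp

end BT

theorem A4_lifts_to_binary_tetrahedral (G : Subgroup (Matrix.SpecialLinearGroup (Fin 2) ℂ))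
    (h : Nonempty
      ((G.map (QuotientGroup.mk' (Subgroup.normalClosure
        ({-1} : Set (Matrix.SpecialLinearGroup (Fin 2) ℂ))))) ≃* (alternatingGroup (Fin 4)))) :
    Nonempty (G ≃* Matrix.SpecialLinearGroup (Fin 2) (ZMod 3)) := by
  obtain ⟨φ⟩ := h
  set SL2C := Matrix.SpecialLinearGroup (Fin 2) ℂ with hSL2C
  set N := Subgroup.normalClosure ({-1} : Set SL2C) with hN
  set π := QuotientGroup.mk' N with hπ
  -- `-1` is central
  have hcomm : ∀ g : SL2C, Commute (-1 : SL2C) g := fun g => by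
    show (-1) * g = g * (-1)
    rw [neg_one_mul, mul_neg_one]
  haveI hzpnormal : (Subgroup.zpowers (-1 : SL2C)).Normal := by
    constructor
    intro n hn g
    obtain ⟨k, rfl⟩ := Subgroup.mem_zpowers_iff.1 hn
    have hc2 : (-1 : SL2C) ^ k * g = g * (-1) ^ k := ((hcomm g).zpow_left k).eq
    have : g * (-1 : SL2C) ^ k * g⁻¹ = (-1) ^ k := by
      rw [← hc2, mul_inv_cancel_right]
    rw [this]
    exact Subgroup.mem_zpowers_iff.2 ⟨k, rfl⟩
  have hmemN : ∀ x : SL2C, x ∈ N ↔ x = 1 ∨ x = -1 := by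
    intro x
    constructor
    · intro hx
      have hle : N ≤ Subgroup.zpowers (-1 : SL2C) :=
        Subgroup.normalClosure_le_normal
          (Set.singleton_subset_iff.2 (Subgroup.mem_zpowers _))
      obtain ⟨k, rfl⟩ := Subgroup.mem_zpowers_iff.1 (hle hx)
      have h2 : ((-1 : SL2C)) ^ (2 : ℤ) = 1 := by
        rw [zpow_two, neg_one_mul, neg_neg]
      rcases Int.even_or_odd k with ⟨m, rfl⟩ | ⟨m, rfl⟩
      · left; rw [show m + m = 2 * m by ring, zpow_mul, h2, one_zpow]
      · right; rw [zpow_add, zpow_one, zpow_mul, h2, one_zpow, one_mul]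
    · rintro (rfl | rfl)
      · exact N.one_mem
      · exact Subgroup.subset_normalClosure (Set.mem_singleton _)
  have hπ1 : ∀ x : SL2C, π x = 1 ↔ x = 1 ∨ x = -1 := by
    intro x
    rw [← hmemN x, hπ, QuotientGroup.mk'_apply, QuotientGroup.eq_one_iff]
  -- the alternating images
  have hσA : BT.sigP ∈ alternatingGroup (Fin 4) := by
    rw [Equiv.Perm.mem_alternatingGroup]; decide
  have hτA : BT.tauP ∈ alternatingGroup (Fin 4) := by
    rw [Equiv.Perm.mem_alternatingGroup]; decide
  have hψAsurj : Function.Surjective (φ.toMonoidHom.comp (π.subgroupMap G)) :=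
    φ.surjective.comp (π.subgroupMap_surjective G)
  set ψA : G →* alternatingGroup (Fin 4) := φ.toMonoidHom.comp (π.subgroupMap G) with hψA
  have hpmap : ∀ x : G, ((π.subgroupMap G x : G.map π) : SL2C ⧸ N) = π (x : SL2C) :=
    fun _ => rfl
  have hψA1 : ∀ x : G, ψA x = 1 ↔ ((x : SL2C) = 1 ∨ (x : SL2C) = -1) := by
    intro x
    constructor
    · intro hx
      have h1 : π.subgroupMap G x = 1 := φ.injective (by rw [map_one]; exact hx)
      have h2 : π (x : SL2C) = 1 := by rw [← hpmap x, h1]; rfl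
      exact (hπ1 _).1 h2
    · intro hx
      have h2 : π (x : SL2C) = 1 := (hπ1 _).2 hx
      have h1 : π.subgroupMap G x = 1 := Subtype.ext (by rw [hpmap x, h2]; rfl)
      show φ (π.subgroupMap G x) = 1
      rw [h1, map_one]
  -- coercion helper
  have hcoe_mul : ∀ a b : G, ((a * b : G) : SL2C) = (a : SL2C) * (b : SL2C) := fun _ _ => rfl
  -- the element i₀
  obtain ⟨i₀, hi₀⟩ := hψAsurj ⟨BT.sigP, hσA⟩
  have hψAii : ψA (i₀ * i₀) = 1 := by
    rw [map_mul, hi₀]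
    exact Subtype.ext (by show BT.sigP * BT.sigP = 1; decide)
  -- G-level square criterion
  have hsq : ∀ g : G, (g : SL2C) * (g : SL2C) = 1 → ψA g = 1 := by
    intro g hg
    rcases BT.sl2c_invol _ hg with h' | h' <;> exact (hψA1 g).2 (by rw [h']; simp)
  have hσ1 : (⟨BT.sigP, hσA⟩ : alternatingGroup (Fin 4)) ≠ 1 := by
    intro hh
    have h' : BT.sigP = 1 := congrArg Subtype.val hh
    exact (by decide : BT.sigP ≠ 1) h' 
  have hii : ((i₀ * i₀ : G) : SL2C) = -1 := by
    rcases (hψA1 (i₀ * i₀)).1 hψAii with h' | h'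
    · exact absurd (hi₀ ▸ hsq i₀ (by rw [← hcoe_mul]; exact h')) hσ1
    · exact h'
  have hneg : (-1 : SL2C) ∈ G := hii ▸ (i₀ * i₀).2
  set z : G := ⟨-1, hneg⟩ with hzdef
  have hi2 : i₀ * i₀ = z := Subtype.ext hii
  have hm1 : (-1 : SL2C) ≠ 1 := by
    intro hh
    have h0 : ((-1 : SL2C) : Matrix (Fin 2) (Fin 2) ℂ) 0 0
        = ((1 : SL2C) : Matrix (Fin 2) (Fin 2) ℂ) 0 0 := by rw [hh]
    rw [Matrix.SpecialLinearGroup.coe_neg, Matrix.SpecialLinearGroup.coe_one] at h0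
    simp [Matrix.one_apply] at h0
    exact absurd h0 (by norm_num)
  have hz1 : z ≠ 1 := fun hh => hm1 (congrArg Subtype.val hh)
  have hz2 : z * z = 1 := Subtype.ext (by show (-1 : SL2C) * (-1) = 1; rw [neg_one_mul, neg_neg])
  have hc : ∀ w : G, w * z = z * w := fun w =>
    Subtype.ext (by show (w : SL2C) * (-1) = (-1) * w; rw [mul_neg_one, neg_one_mul])
  have hzc : ∀ u v : G, (z * u) * (z * v) = u * v := by
    intro u v
    calc (z * u) * (z * v) = z * ((u * z) * v) := by rw [mul_assoc, mul_assoc]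
    _ = z * (z * (u * v)) := by rw [hc u, mul_assoc]
    _ = (z * z) * (u * v) := by rw [mul_assoc]
    _ = u * v := by rw [hz2, one_mul]
  have hψAz : ψA z = 1 := (hψA1 z).2 (Or.inr rfl)
  -- kernel criterion at G level
  have hG1 : ∀ x : G, ψA x = 1 → x = 1 ∨ x = z := by
    intro x hx
    rcases (hψA1 x).1 hx with h' | h'
    · exact Or.inl (Subtype.ext h')
    · exact Or.inr (Subtype.ext h')
  -- cardinality
  have hcard : Nat.card G = 24 := by
    have hkerz : ψA.ker = Subgroup.zpowers z := by
      ext x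
      rw [MonoidHom.mem_ker]
      constructor
      · intro hx
        rcases hG1 x hx with rfl | rfl
        · exact Subgroup.one_mem _
        · exact Subgroup.mem_zpowers _
      · intro hx
        obtain ⟨k, rfl⟩ := Subgroup.mem_zpowers_iff.1 hx
        rw [map_zpow, hψAz, one_zpow]
    have hq : Nat.card (G ⧸ ψA.ker) = 12 := by
      rw [Nat.card_congr (QuotientGroup.quotientKerEquivOfSurjective ψA hψAsurj).toEquiv,
        Nat.card_eq_fintype_card]
      decide
    have hkc : Nat.card ψA.ker = 2 := by
      rw [hkerz, Nat.card_zpowers]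
      exact orderOf_eq_prime (by rw [pow_two]; exact hz2) hz1
    rw [Subgroup.card_eq_card_quotient_mul_card_subgroup ψA.ker, hq, hkc]
  -- the element t
  obtain ⟨t₀, ht₀⟩ := hψAsurj ⟨BT.tauP, hτA⟩
  have hψAt3 : ψA (t₀ * t₀ * t₀) = 1 := by
    rw [map_mul, map_mul, ht₀]
    exact Subtype.ext (by show BT.tauP * BT.tauP * BT.tauP = 1; decide)
  obtain ⟨t, ht3, hψAt⟩ : ∃ t : G, t * t * t = 1 ∧ ψA t = ⟨BT.tauP, hτA⟩ := by
    rcases hG1 _ hψAt3 with h' | h'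
    · exact ⟨t₀, h', ht₀⟩
    · refine ⟨z * t₀, ?_, by rw [map_mul, hψAz, one_mul, ht₀]⟩
      calc (z * t₀) * (z * t₀) * (z * t₀) = (t₀ * t₀) * (z * t₀) := by rw [hzc t₀ t₀]
      _ = ((t₀ * t₀) * z) * t₀ := by rw [← mul_assoc]
      _ = (z * (t₀ * t₀)) * t₀ := by rw [hc (t₀ * t₀)]
      _ = z * (t₀ * t₀ * t₀) := by rw [mul_assoc z]
      _ = 1 := by rw [h', hz2]
  -- the Perm-valued homomorphism
  set ψ : G →* Equiv.Perm (Fin 4) := (alternatingGroup (Fin 4)).subtype.comp ψA with hψdef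
  have hψi₀ : ψ i₀ = BT.sigP := by rw [hψdef, MonoidHom.comp_apply, hi₀]; rfl
  have hψt : ψ t = BT.tauP := by rw [hψdef, MonoidHom.comp_apply, hψAt]; rfl
  have hψz : ψ z = 1 := by rw [hψdef, MonoidHom.comp_apply, hψAz]; rfl
  have hGker : ∀ x : G, ψ x = 1 → x = 1 ∨ x = z := by
    intro x hx
    exact hG1 x (Subtype.ext hx)
  -- the element j₀
  set j₀ : G := t * i₀ * t⁻¹ with hj₀def
  have hψj₀ : ψ j₀ = BT.sigP' := by
    simp only [hj₀def, map_mul, map_inv, hψi₀, hψt]; rfl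
  have hti : t * i₀ = j₀ * t := (inv_mul_cancel_right (t * i₀) t).symm
  have hj2 : j₀ * j₀ = z := by
    have h4 : j₀ * j₀ = t * (i₀ * i₀) * t⁻¹ := by rw [hj₀def]; group
    rw [h4, hi2, hc t, mul_assoc, mul_inv_cancel, mul_one]
  -- the commutation relation between i₀ and j₀
  have hji : j₀ * i₀ = z * (i₀ * j₀) := by
    have hu : ψ ((j₀ * i₀) * (i₀ * j₀)⁻¹) = 1 := by
      simp only [map_mul, map_inv, hψi₀, hψj₀]
      decide
    rcases hGker _ hu with h' | h'
    · -- i₀ and j₀ commute : contradiction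
      exfalso
      have hcm : j₀ * i₀ = i₀ * j₀ := by
        rw [← mul_inv_eq_one]; exact h'
      have hcm' : j₀⁻¹ * i₀ = i₀ * j₀⁻¹ := (Commute.inv_left hcm : _)
      have hw : (i₀ * j₀⁻¹) * (i₀ * j₀⁻¹) = 1 := by
        calc (i₀ * j₀⁻¹) * (i₀ * j₀⁻¹) = i₀ * ((j₀⁻¹ * i₀) * j₀⁻¹) := by
              rw [mul_assoc, mul_assoc]
        _ = i₀ * ((i₀ * j₀⁻¹) * j₀⁻¹) := by rw [hcm']
        _ = (i₀ * i₀) * (j₀⁻¹ * j₀⁻¹) := by rw [mul_assoc, mul_assoc]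
        _ = z * (j₀ * j₀)⁻¹ := by rw [hi2, ← mul_inv_rev j₀ j₀]
        _ = z * z⁻¹ := by rw [hj2]
        _ = 1 := mul_inv_cancel z
      have hψw : ψ (i₀ * j₀⁻¹) = 1 :=
        Subtype.ext_iff.1 (hsq _ (by rw [← hcoe_mul]; rw [Subtype.ext_iff] at hw; exact hw))
      rw [map_mul, map_inv, hψi₀, hψj₀] at hψw
      exact (by decide : ¬(BT.sigP * BT.sigP'⁻¹ = 1)) hψw
    · rw [mul_inv_eq_iff_eq_mul] at h'
      exact h'
  -- conjugation of j₀ by t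
  have hkcase : t * j₀ * t⁻¹ = i₀ * j₀ ∨ t * j₀ * t⁻¹ = z * (i₀ * j₀) := by
    have hv : ψ ((t * j₀ * t⁻¹) * (i₀ * j₀)⁻¹) = 1 := by
      simp only [map_mul, map_inv, hψi₀, hψj₀, hψt]
      decide
    rcases hGker _ hv with h' | h'
    · left; rw [← mul_inv_eq_one]; exact h'
    · right; rw [mul_inv_eq_iff_eq_mul] at h'; exact h'
  rcases hkcase with hk | hk
  · -- branch A : use (z, i₀, j₀, t)
    have htj : t * j₀ = (i₀ * j₀) * t := by
      rw [← hk, inv_mul_cancel_right]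
    have hinj : Function.Injective (BT.NF z i₀ j₀ t) :=
      BT.inj_NF ψ z i₀ j₀ t hz1 hψz hψi₀ hψj₀ hψt
    exact BT.main_iso z i₀ j₀ t hz2 (hc i₀) (hc j₀) (hc t) hi2 hj2 ht3 hji hti
      (by rw [htj]) hinj hcard
  · -- branch B : use (z, z*i₀, z*j₀, t)
    have hψi₁ : ψ (z * i₀) = BT.sigP := by rw [map_mul, hψz, one_mul, hψi₀]
    have hψj₁ : ψ (z * j₀) = BT.sigP' := by rw [map_mul, hψz, one_mul, hψj₀]
    have hi2' : (z * i₀) * (z * i₀) = z := by rw [hzc, hi2]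
    have hj2' : (z * j₀) * (z * j₀) = z := by rw [hzc, hj2]
    have hji' : (z * j₀) * (z * i₀) = z * ((z * i₀) * (z * j₀)) := by
      rw [hzc, hzc, hji]
    have hti' : t * (z * i₀) = (z * j₀) * t := by
      rw [← mul_assoc t z i₀, hc t, mul_assoc z t i₀, hti, ← mul_assoc z j₀ t]
    have htj' : t * (z * j₀) = ((z * i₀) * (z * j₀)) * t := by
      have hk2 : t * j₀ = (z * (i₀ * j₀)) * t := by
        rw [← hk, inv_mul_cancel_right]
      rw [← mul_assoc t z j₀, hc t, mul_assoc z t j₀, hk2, ← mul_assoc z (z * (i₀ * j₀)) t,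
        ← mul_assoc z z (i₀ * j₀), hz2, one_mul, hzc i₀ j₀]
    have hinj : Function.Injective (BT.NF z (z * i₀) (z * j₀) t) :=
      BT.inj_NF ψ z (z * i₀) (z * j₀) t hz1 hψz hψi₁ hψj₁ hψt
    exact BT.main_iso z (z * i₀) (z * j₀) t hz2 (hc (z * i₀)) (hc (z * j₀)) (hc t)
      hi2' hj2' ht3 hji' hti' htj' hinj hcard
end

section
/- The ring ℤ[(1+√-19)/2] is not a Euclidean domain (for any choice of Euclidean function). -/
open Polynomial NumberField


section Aux

/-- A rational whose square is an integer is an integer. -/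
lemma rat_sq_int {q : ℚ} {m : ℤ} (h : q ^ 2 = (m : ℚ)) : ∃ r : ℤ, (r : ℚ) = q := by
  have hint : IsIntegral ℤ q := by
    refine ⟨X ^ 2 - C m, ?_, ?_⟩
    · apply Polynomial.monic_X_pow_sub_C
      norm_num
    · rw [eval₂_sub, eval₂_pow, eval₂_X, eval₂_C]
      simp [h]
  obtain ⟨r, hr⟩ := IsIntegrallyClosed.isIntegral_iff.mp hint
  exact ⟨r, hr⟩

lemma nineteen_dvd {y : ℚ} {m : ℤ} (hy : y ≠ 0) (hm : 76 * y ^ 2 = (m : ℚ)) :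
    (19 : ℤ) ∣ m := by
  have h38 : (38 * y) ^ 2 = ((19 * m : ℤ) : ℚ) := by push_cast; linear_combination 19 * hm
  obtain ⟨r, hr⟩ := rat_sq_int h38
  have hr2 : r ^ 2 = 19 * m := by
    have : ((r ^ 2 : ℤ) : ℚ) = ((19 * m : ℤ) : ℚ) := by push_cast at h38 ⊢; rw [hr]; linarith [h38]
    exact_mod_cast this
  have hp : Prime (19 : ℤ) := by norm_num
  have h19r : (19 : ℤ) ∣ r := by
    have : (19 : ℤ) ∣ r ^ 2 := ⟨m, by linarith⟩
    exact hp.dvd_of_dvd_pow this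
  obtain ⟨s, hs⟩ := h19r
  refine ⟨s ^ 2, ?_⟩
  have : 19 * m = 19 * (19 * s ^ 2) := by rw [← hr2, hs]; ring
  omega

lemma norm_one_case {t n : ℤ} {x y : ℚ} (ht : (t : ℚ) = 2 * x)
    (hn : (n : ℚ) = x ^ 2 + 19 * y ^ 2) (h1 : n = 1) :
    (x = 1 ∨ x = -1) ∧ y = 0 := by
  subst h1
  have hn' : (1:ℚ) = x ^ 2 + 19 * y ^ 2 := by exact_mod_cast hn
  have ht2 : (t:ℚ) ^ 2 = 4 * x ^ 2 := by rw [ht]; ring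
  have key : (4 : ℚ) = t ^ 2 + 76 * y ^ 2 := by rw [ht2]; linarith
  have hy : y = 0 := by
    by_contra hy
    have hm : 76 * y ^ 2 = ((4 - t ^ 2 : ℤ) : ℚ) := by push_cast; linarith
    have hdvd := nineteen_dvd hy hm
    have hpos : (0 : ℤ) < 4 - t ^ 2 := by
      have : (0:ℚ) < 76 * y ^ 2 := by positivity
      rw [hm] at this; exact_mod_cast this
    have := Int.le_of_dvd hpos hdvd
    nlinarith
  subst hy
  have ht4 : t ^ 2 = 4 := by
    have : (t : ℚ) ^ 2 = 4 := by nlinarith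
    exact_mod_cast this
  have htb : t = 2 ∨ t = -2 := by
    have h1 : t ≤ 2 := by nlinarith
    have h2 : -2 ≤ t := by nlinarith
    interval_cases t <;> omega
  constructor
  · rcases htb with h | h <;> [left; right] <;> subst h <;> push_cast at ht <;> linarith
  · rfl

end Aux


section QRep

variable {K : Type} [Field K] [CharZero K] {α : K}

/-- `z = x + y·α` -/
def QRep (α z : K) (x y : ℚ) : Prop :=
  z = algebraMap ℚ K x + algebraMap ℚ K y * α

lemma alpha_not_rat (hα : α ^ 2 = -19) (q : ℚ) : algebraMap ℚ K q ≠ α := by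
  intro h
  have h2 : algebraMap ℚ K (q ^ 2) = algebraMap ℚ K (-19) := by
    rw [map_pow, h, hα]; simp
  have : q ^ 2 = -19 := (algebraMap ℚ K).injective h2
  nlinarith [sq_nonneg q]

lemma rep_unique (hα : α ^ 2 = -19) {z : K} {x y x' y' : ℚ}
    (h1 : QRep α z x y) (h2 : QRep α z x' y') : x = x' ∧ y = y' := by
  unfold QRep at h1 h2
  by_cases hy : y = y'
  · subst hy
    have : algebraMap ℚ K x = algebraMap ℚ K x' := by
      have := h1.symm.trans h2
      exact add_right_cancel this
    exact ⟨(algebraMap ℚ K).injective this, rfl⟩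
  · exfalso
    have hne : algebraMap ℚ K (y - y') ≠ 0 := by
      simp only [ne_eq, _root_.map_eq_zero]
      exact fun h => hy (by linarith [sub_eq_zero.mp h])
    have key : algebraMap ℚ K ((x' - x) / (y - y')) = α := by
      rw [map_div₀]
      rw [div_eq_iff hne]
      have := h1.symm.trans h2
      rw [map_sub, map_sub]
      linear_combination -this
    exact alpha_not_rat hα _ key

lemma exists_rep (hα : α ^ 2 = -19) (hK : Algebra.adjoin ℚ ({α} : Set K) = ⊤)
    (z : K) : ∃ x y : ℚ, QRep α z x y := by
  have hz : z ∈ Algebra.adjoin ℚ ({α} : Set K) := by rw [hK]; trivial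
  induction hz using Algebra.adjoin_induction with
  | mem w hw =>
    rw [Set.mem_singleton_iff] at hw
    exact ⟨0, 1, by simp [QRep, hw]⟩
  | algebraMap r => exact ⟨r, 0, by simp [QRep]⟩
  | add w v _ _ hw hv =>
    obtain ⟨x1, y1, h1⟩ := hw
    obtain ⟨x2, y2, h2⟩ := hv
    exact ⟨x1 + x2, y1 + y2, by rw [QRep, h1, h2, map_add, map_add]; ring⟩
  | mul w v _ _ hw hv =>
    obtain ⟨x1, y1, h1⟩ := hw
    obtain ⟨x2, y2, h2⟩ := hv
    refine ⟨x1 * x2 - 19 * y1 * y2, x1 * y2 + y1 * x2, ?_⟩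
    rw [QRep, h1, h2]
    simp only [map_sub, map_add, map_mul, map_ofNat]
    linear_combination (algebraMap ℚ K y1 * algebraMap ℚ K y2) * hα

lemma rep_mul (hα : α ^ 2 = -19) {z w : K} {x1 y1 x2 y2 : ℚ}
    (h1 : QRep α z x1 y1) (h2 : QRep α w x2 y2) :
    QRep α (z * w) (x1 * x2 - 19 * y1 * y2) (x1 * y2 + y1 * x2) := by
  rw [QRep, h1, h2]
  simp only [map_sub, map_add, map_mul, map_ofNat]
  linear_combination (algebraMap ℚ K y1 * algebraMap ℚ K y2) * hα

end QRep

section Integral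

variable {K : Type} [Field K] [CharZero K] {α : K}

lemma integral_coeffs (hα : α ^ 2 = -19) {z : K} (hz : IsIntegral ℤ z) {x y : ℚ}
    (hr : QRep α z x y) :
    ∃ t n : ℤ, (t : ℚ) = 2 * x ∧ (n : ℚ) = x ^ 2 + 19 * y ^ 2 := by
  by_cases hy : y = 0
  · subst hy
    have hzx : z = algebraMap ℚ K x := by rw [hr]; simp
    have hxint : IsIntegral ℤ x := by
      rw [hzx] at hz
      exact (isIntegral_algebraMap_iff ((algebraMap ℚ K).injective)).mp hz
    obtain ⟨k, hk⟩ := IsIntegrallyClosed.isIntegral_iff.mp hxint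
    have hk' : (k : ℚ) = x := hk
    exact ⟨2 * k, k ^ 2, by push_cast [hk']; ring, by push_cast [hk']; ring⟩
  · set p : ℚ[X] := X ^ 2 + C (-(2 * x)) * X + C (x ^ 2 + 19 * y ^ 2) with hp
    have hpdeg : p.natDegree = 2 := by rw [hp]; compute_degree!
    have hmonic : p.Monic := by
      rw [Monic, leadingCoeff, hpdeg, hp]
      simp only [coeff_add, coeff_C_mul, coeff_X_pow, coeff_C, coeff_X]
      norm_num
    have haeval : aeval z p = 0 := by
      rw [hp]
      simp only [map_add, map_mul, map_pow, aeval_X, aeval_C]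
      rw [hr]
      simp only [map_add, map_mul, map_pow, map_neg, map_ofNat]
      linear_combination (algebraMap ℚ K y) ^ 2 * hα
    have hQint : IsIntegral ℚ z := hz.tower_top
    have hdvd : minpoly ℚ z ∣ p := minpoly.dvd ℚ z haeval
    have hpne : p ≠ 0 := hmonic.ne_zero
    have hmp_monic : (minpoly ℚ z).Monic := minpoly.monic hQint
    have hdeg_le : (minpoly ℚ z).natDegree ≤ 2 := by
      have := Polynomial.natDegree_le_of_dvd hdvd hpne
      omega
    have hdeg_pos : 0 < (minpoly ℚ z).natDegree := minpoly.natDegree_pos hQint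
    have hdeg_ne_one : (minpoly ℚ z).natDegree ≠ 1 := by
      intro h1
      have heq := hmp_monic.eq_X_add_C h1
      have h0 := minpoly.aeval ℚ z
      rw [heq] at h0
      simp only [map_add, aeval_X, aeval_C] at h0
      have hzq : z = algebraMap ℚ K (-((minpoly ℚ z).coeff 0)) := by
        rw [map_neg]; linear_combination h0
      have key : algebraMap ℚ K ((-((minpoly ℚ z).coeff 0) - x) / y) = α := by
        rw [map_div₀, div_eq_iff (by simpa using hy : algebraMap ℚ K y ≠ 0)]
        rw [QRep] at hr
        rw [map_sub]
        linear_combination hzq.symm.trans hr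
      exact alpha_not_rat hα _ key
    have hdeg2 : (minpoly ℚ z).natDegree = 2 := by omega
    obtain ⟨q, hq⟩ := hdvd
    have hmpne : minpoly ℚ z ≠ 0 := hmp_monic.ne_zero
    have hqne : q ≠ 0 := fun h => hpne (by rw [hq, h, mul_zero])
    have hqmonic : q.Monic := hmp_monic.of_mul_monic_left (hq ▸ hmonic)
    have hqdeg : q.natDegree = 0 := by
      have hnd := Polynomial.natDegree_mul hmpne hqne
      rw [← hq, hpdeg, hdeg2] at hnd
      omega
    have hq1 : q = 1 := hqmonic.natDegree_eq_zero.mp hqdeg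
    have hpeq : minpoly ℚ z = p := by rw [hq, hq1, mul_one]
    have hmap : minpoly ℚ z = (minpoly ℤ z).map (algebraMap ℤ ℚ) :=
      minpoly.isIntegrallyClosed_eq_field_fractions' ℚ hz
    refine ⟨-((minpoly ℤ z).coeff 1), (minpoly ℤ z).coeff 0, ?_, ?_⟩
    · have h1 : p.coeff 1 = -(2 * x) := by
        rw [hp]
        simp only [coeff_add, coeff_C_mul, coeff_X_pow, coeff_C, coeff_X]
        norm_num
      have h2 : p.coeff 1 = ((minpoly ℤ z).coeff 1 : ℚ) := by
        rw [← hpeq, hmap, Polynomial.coeff_map]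
        simp
      push_cast
      rw [← h2, h1]
      ring
    · have h1 : p.coeff 0 = x ^ 2 + 19 * y ^ 2 := by
        rw [hp]
        simp only [coeff_add, coeff_C_mul, coeff_X_pow, coeff_C, coeff_X]
        norm_num
      have h2 : p.coeff 0 = ((minpoly ℤ z).coeff 0 : ℚ) := by
        rw [← hpeq, hmap, Polynomial.coeff_map]
        simp
      rw [← h2, h1]

end Integral

theorem ringOfIntegers_sqrt_neg19_not_euclidean
    (K : Type) [Field K] [NumberField K] (α : K) (hα : α ^ 2 = -19)
    (hK : Algebra.adjoin ℚ ({α} : Set K) = ⊤) :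
    ¬ ∃ φ : NumberField.RingOfIntegers K → ℕ,
        ∀ a b : NumberField.RingOfIntegers K, b ≠ 0 →
          ∃ q r : NumberField.RingOfIntegers K,
            a = b * q + r ∧ (r = 0 ∨ φ r < φ b) :=  by
  rintro ⟨φ, hφ⟩
  -- the norm predicate
  set HN : 𝓞 K → ℤ → Prop :=
    fun z n => ∃ x y : ℚ, QRep α (z : K) x y ∧ (n : ℚ) = x ^ 2 + 19 * y ^ 2 with hHN
  have hexists : ∀ z : 𝓞 K, ∃ n : ℤ, HN z n := by
    intro z
    obtain ⟨x, y, hxy⟩ := exists_rep hα hK (z : K)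
    obtain ⟨t, n, _, hn⟩ := integral_coeffs hα (z.isIntegral_coe) hxy
    exact ⟨n, x, y, hxy, hn⟩
  have huniq : ∀ (z : 𝓞 K) (n m : ℤ), HN z n → HN z m → n = m := by
    rintro z n m ⟨x, y, hxy, hn⟩ ⟨x', y', hxy', hm⟩
    obtain ⟨hx, hy⟩ := rep_unique hα hxy hxy'
    have : (n : ℚ) = (m : ℚ) := by rw [hn, hm, hx, hy]
    exact_mod_cast this
  have hmul : ∀ (z w : 𝓞 K) (n m : ℤ), HN z n → HN w m → HN (z * w) (n * m) := by
    rintro z w n m ⟨x1, y1, h1, hn⟩ ⟨x2, y2, h2, hm⟩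
    refine ⟨x1 * x2 - 19 * y1 * y2, x1 * y2 + y1 * x2, ?_, ?_⟩
    · have : ((z * w : 𝓞 K) : K) = (z : K) * (w : K) := map_mul _ _ _
      rw [this]
      exact rep_mul hα h1 h2
    · push_cast
      rw [hn, hm]; ring
  have hdvd : ∀ (a b : 𝓞 K) (na nb : ℤ), HN a na → HN b nb → b ∣ a → nb ∣ na := by
    rintro a b na nb hna hnb ⟨c, rfl⟩
    obtain ⟨nc, hnc⟩ := hexists c
    exact ⟨nc, huniq _ _ _ hna (hmul _ _ _ _ hnb hnc)⟩
  have hnonneg : ∀ (z : 𝓞 K) (n : ℤ), HN z n → 0 ≤ n := by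
    rintro z n ⟨x, y, _, hn⟩
    have : (0 : ℚ) ≤ (n : ℚ) := by rw [hn]; positivity
    exact_mod_cast this
  have hnormone : ∀ z : 𝓞 K, HN z 1 → z = 1 ∨ z = -1 := by
    rintro z ⟨x, y, hxy, hn⟩
    obtain ⟨t, n', ht, hn'⟩ := integral_coeffs hα (z.isIntegral_coe) hxy
    have hn'1 : n' = 1 := by
      have : (n' : ℚ) = ((1 : ℤ) : ℚ) := by rw [hn', ← hn]
      exact_mod_cast this
    obtain ⟨hx, hy⟩ := norm_one_case ht hn' hn'1
    rw [QRep, hy] at hxy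
    simp only [map_zero, zero_mul, add_zero] at hxy
    rcases hx with h | h
    · left
      have : (z : K) = ((1 : 𝓞 K) : K) := by rw [hxy, h]; simp
      exact_mod_cast this
    · right
      have : (z : K) = ((-1 : 𝓞 K) : K) := by rw [hxy, h]; simp
      exact_mod_cast this
  have hone : HN 1 1 := by
    refine ⟨1, 0, ?_, by norm_num⟩
    rw [QRep]
    simp
  have hunitnorm : ∀ (u : 𝓞 K) (n : ℤ), IsUnit u → HN u n → n = 1 := by
    intro u n hu hn
    obtain ⟨v, huv⟩ := hu.exists_right_inv
    obtain ⟨m, hm⟩ := hexists v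
    have h1 : n * m = 1 := huniq _ _ _ (huv ▸ hmul _ _ _ _ hn hm) hone
    have hu' : n = 1 ∨ n = -1 := Int.isUnit_iff.mp (IsUnit.of_mul_eq_one (a := n) _ h1)
    have := hnonneg _ _ hn
    omega
  -- concrete elements and their norms
  have h2K : ((2 : 𝓞 K) : K) = algebraMap ℚ K 2 := by
    rw [NumberField.RingOfIntegers.coe_eq_algebraMap, map_ofNat, map_ofNat]
  have hHN2 : HN 2 4 := by
    refine ⟨2, 0, ?_, by norm_num⟩
    rw [QRep, h2K]
    simp
  have h3K : ((3 : 𝓞 K) : K) = algebraMap ℚ K 3 := by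
    rw [NumberField.RingOfIntegers.coe_eq_algebraMap, map_ofNat, map_ofNat]
  have hHN3 : HN 3 9 := by
    refine ⟨3, 0, ?_, by norm_num⟩
    rw [QRep, h3K]
    simp
  -- ω = (1 + α)/2
  have hωint : IsIntegral ℤ ((1 + α) / 2) := by
    refine ⟨X ^ 2 - X + C 5, ?_, ?_⟩
    · have hd : (X ^ 2 - X + C 5 : ℤ[X]).natDegree = 2 := by compute_degree!
      rw [Monic, leadingCoeff, hd]
      simp only [coeff_add, coeff_sub, coeff_X_pow, coeff_C, coeff_X]
      norm_num
    · rw [eval₂_add, eval₂_sub, eval₂_pow, eval₂_X, eval₂_C]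
      have h2 : (2 : K) ≠ 0 := two_ne_zero
      field_simp
      ring_nf
      rw [hα]
      ring
      norm_num
  set ω : 𝓞 K := ⟨(1 + α) / 2, hωint⟩ with hω
  have hωK : (ω : K) = (1 + α) / 2 := rfl
  have hhalf : algebraMap ℚ K (1/2) = (1 : K)/2 := by
    rw [map_div₀]; norm_num
  have hHNω : HN ω 5 := by
    refine ⟨1/2, 1/2, ?_, by norm_num⟩
    rw [QRep, hωK, hhalf]
    have h2 : (2 : K) ≠ 0 := two_ne_zero
    field_simp
  have hHNω1 : HN (ω - 1) 5 := by
    refine ⟨-(1/2), 1/2, ?_, by norm_num⟩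
    have : ((ω - 1 : 𝓞 K) : K) = (1 + α) / 2 - 1 := by
      show algebraMap (𝓞 K) K (ω - 1) = _
      rw [map_sub, map_one, ← NumberField.RingOfIntegers.coe_eq_algebraMap, hωK]
    rw [QRep, this, map_neg, hhalf]
    have h2 : (2 : K) ≠ 0 := two_ne_zero
    field_simp
    ring
  have hHNω2 : HN (ω + 1) 7 := by
    refine ⟨3/2, 1/2, ?_, by norm_num⟩
    have : ((ω + 1 : 𝓞 K) : K) = (1 + α) / 2 + 1 := by
      show algebraMap (𝓞 K) K (ω + 1) = _
      rw [map_add, map_one, ← NumberField.RingOfIntegers.coe_eq_algebraMap, hωK]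
    rw [QRep, this, hhalf]
    have h2 : (2 : K) ≠ 0 := two_ne_zero
    rw [map_div₀]
    norm_num
    field_simp
    ring
  -- 2 is a nonzero nonunit
  have h2ne : (2 : 𝓞 K) ≠ 0 := by
    intro h
    have : ((2 : 𝓞 K) : K) = ((0 : 𝓞 K) : K) := by rw [h]
    simp at this
  have h2nu : ¬ IsUnit (2 : 𝓞 K) := by
    intro h
    have := hunitnorm _ _ h hHN2
    omega
  -- minimal nonzero nonunit
  set P : Set (𝓞 K) := {z | z ≠ 0 ∧ ¬ IsUnit z} with hP
  have hPne : (φ '' P).Nonempty := ⟨φ 2, 2, ⟨h2ne, h2nu⟩, rfl⟩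
  obtain ⟨b, hbP, hbval⟩ : ∃ b ∈ P, φ b = sInf (φ '' P) := by
    obtain ⟨b, hbP, hb⟩ := Nat.sInf_mem hPne
    exact ⟨b, hbP, hb⟩
  have hbmin : ∀ c ∈ P, φ b ≤ φ c := fun c hc => by
    rw [hbval]; exact Nat.sInf_le ⟨c, hc, rfl⟩
  -- every element has remainder 0, 1 or -1 mod b
  have hside : ∀ a : 𝓞 K, ∃ q r : 𝓞 K, a = b * q + r ∧ (r = 0 ∨ r = 1 ∨ r = -1) := by
    intro a
    obtain ⟨q, r, hqr, hr⟩ := hφ a b hbP.1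
    refine ⟨q, r, hqr, ?_⟩
    by_cases hr0 : r = 0
    · exact Or.inl hr0
    rcases hr with h0 | hlt
    · exact Or.inl h0
    by_cases hru : IsUnit r
    · obtain ⟨nr, hnr⟩ := hexists r
      have : nr = 1 := hunitnorm _ _ hru hnr
      rcases hnormone r (this ▸ hnr) with h | h
      · exact Or.inr (Or.inl h)
      · exact Or.inr (Or.inr h)
    · exfalso
      have : r ∈ P := ⟨hr0, hru⟩
      exact absurd (hbmin r this) (by omega)
  -- b divides 2 or 3
  have hb23 : b ∣ 2 ∨ b ∣ 3 := by
    obtain ⟨q, r, hqr, hr⟩ := hside 2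
    rcases hr with h | h | h
    · subst h; left; exact ⟨q, by linear_combination hqr⟩
    · exfalso
      subst h
      have hb1 : b ∣ 1 := ⟨q, by linear_combination hqr⟩
      exact hbP.2 (isUnit_of_dvd_one hb1)
    · subst h; right; exact ⟨q, by linear_combination hqr⟩
  -- b divides ω, ω - 1 or ω + 1
  have hbω : b ∣ ω ∨ b ∣ (ω - 1) ∨ b ∣ (ω + 1) := by
    obtain ⟨q, r, hqr, hr⟩ := hside ω
    rcases hr with h | h | h
    · subst h; left; exact ⟨q, by linear_combination hqr⟩
    · subst h; right; left; exact ⟨q, by linear_combination hqr⟩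
    · subst h; right; right; exact ⟨q, by linear_combination hqr⟩
  obtain ⟨nb, hnb⟩ := hexists b
  have hd49 : nb ∣ 4 ∨ nb ∣ 9 := by
    rcases hb23 with h | h
    · exact Or.inl (hdvd _ _ _ _ hHN2 hnb h)
    · exact Or.inr (hdvd _ _ _ _ hHN3 hnb h)
  have hd57 : nb ∣ 5 ∨ nb ∣ 7 := by
    rcases hbω with h | h | h
    · exact Or.inl (hdvd _ _ _ _ hHNω hnb h)
    · exact Or.inl (hdvd _ _ _ _ hHNω1 hnb h)
    · exact Or.inr (hdvd _ _ _ _ hHNω2 hnb h)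
  have hnb1 : nb ∣ 1 := by
    rcases hd49 with h4 | h9 <;> rcases hd57 with h5 | h7
    · have := dvd_sub h5 h4; simpa using this
    · have := dvd_sub (h7) (Dvd.dvd.mul_left h4 2)
      have h1 : nb ∣ (7 - 2 * 4 : ℤ) := this
      have h1' : nb ∣ (-1 : ℤ) := by norm_num at h1 ⊢; exact h1
      exact (dvd_neg.mp h1')
    · have := dvd_sub (Dvd.dvd.mul_left h5 2) h9; simpa using this
    · have := dvd_sub (Dvd.dvd.mul_left h9 4) (Dvd.dvd.mul_left h7 5); simpa using this
  have hnbeq : nb = 1 := by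
    have h1 : nb = 1 ∨ nb = -1 := Int.isUnit_iff.mp (isUnit_of_dvd_one hnb1)
    have := hnonneg _ _ hnb
    omega
  rcases hnormone b (hnbeq ▸ hnb) with h | h
  · exact hbP.2 (h ▸ isUnit_one)
  · exact hbP.2 (h ▸ (isUnit_one.neg))
end
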